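/- In the 32-dimensional pathions (Cayley-Dickson algebra of dimension 32), (i_2 + i_19)(i_4 − i_21) = 0; i.e., the pathions contain zero divisors among Assessor diagonals with inner XOR 17. -/

import Mathlib

/-- The Cayley-Dickson tower of algebras over ℝ: `CD n` has dimension `2^n`. -/
def CD : ℕ → Type
  | 0 => ℝ
  | n+1 => CD n × CD n

noncomputable instance instCDAddCommGroup : (n : ℕ) → AddCommGroup (CD n)
  | 0 => inferInstanceAs (AddCommGroup ℝ)
  | n+1 => @Prod.instAddCommGroup _ _ (instCDAddCommGroup n) (instCDAddCommGroup n)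

/-- Cayley-Dickson conjugation. -/
noncomputable def CD.conj : {n : ℕ} → CD n → CD n
  | 0, x => x
  | _+1, (a, b) => (CD.conj a, -b)

/-- Cayley-Dickson multiplication: `(a,b)(c,d) = (ac − d* b, da + b c*)`. -/
noncomputable def CD.mul : {n : ℕ} → CD n → CD n → CD n
  | 0, x, y => (show ℝ from x) * (show ℝ from y)
  | _+1, (a, b), (c, d) =>
      (CD.mul a c - CD.mul (CD.conj d) b, CD.mul d a + CD.mul b (CD.conj c))

/-- The standard basis unit `i_k` of `CD n`, for `k < 2^n`. -/
noncomputable def CD.e : (n : ℕ) → ℕ → CD n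
  | 0, _ => (1 : ℝ)
  | n+1, k => if k < 2^n then (CD.e n k, 0) else (0, CD.e n (k - 2^n))


noncomputable instance instCDModule : (n : ℕ) → Module ℝ (CD n)
  | 0 => inferInstanceAs (Module ℝ ℝ)
  | n+1 =>
      letI := instCDModule n
      inferInstanceAs (Module ℝ (CD n × CD n))

/-! Write a pathion as a pair of sedenions. Then `i_2 + i_19 = (i_2, i_3)` and
`i_4 - i_21 = (i_4, -i_5)`, and since `i_k* = -i_k` for `k ≠ 0`, the Cayley-Dickson product
`(a, b)(c, d) = (ac - d* b, da + b c*)` of the two is `(i_2 i_4 - i_5 i_3, -i_5 i_2 - i_3 i_4)`.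
All four units lie in the octonions, where `i_2 i_4 = i_5 i_3 = i_6` and `i_5 i_2 = -i_3 i_4 = -i_7`,
so both components vanish. -/

namespace CD

/-- A pair of elements of `CD n`, seen as an element of `CD (n+1)` (so that the instances of
`CD (n+1)`, not those of the product type, apply to it). -/
def mk {n : ℕ} (a b : CD n) : CD (n+1) := (a, b)

section Pairs

variable {n : ℕ}

theorem exists_eq_mk (x : CD (n+1)) : ∃ a b, x = mk a b := ⟨x.1, x.2, rfl⟩

@[simp]
theorem mk_add_mk (a b c d : CD n) : mk a b + mk c d = mk (a + c) (b + d) := rfl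

@[simp]
theorem mk_sub_mk (a b c d : CD n) : mk a b - mk c d = mk (a - c) (b - d) := rfl

@[simp]
theorem neg_mk (a b : CD n) : -mk a b = mk (-a) (-b) := rfl

theorem mk_zero_zero : mk (0 : CD n) 0 = 0 := rfl

@[simp]
theorem conj_mk (a b : CD n) : conj (mk a b) = mk (conj a) (-b) := rfl

theorem mul_mk (a b c d : CD n) :
    mul (mk a b) (mk c d) = mk (mul a c - mul (conj d) b) (mul d a + mul b (conj c)) := rfl

end Pairs

theorem conj_add : ∀ {n : ℕ} (x y : CD n), conj (x + y) = conj x + conj y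
  | 0, _, _ => rfl
  | _+1, x, y => by
    obtain ⟨a, b, rfl⟩ := exists_eq_mk x
    obtain ⟨c, d, rfl⟩ := exists_eq_mk y
    rw [mk_add_mk, conj_mk, conj_mk, conj_mk, mk_add_mk, conj_add, neg_add]

mutual

theorem mul_add : ∀ {n : ℕ} (x y z : CD n), mul x (y + z) = mul x y + mul x z
  | 0, x, y, z => _root_.mul_add (show ℝ from x) y z
  | _+1, x, y, z => by
    obtain ⟨a, b, rfl⟩ := exists_eq_mk x
    obtain ⟨c, d, rfl⟩ := exists_eq_mk y
    obtain ⟨c', d', rfl⟩ := exists_eq_mk z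
    rw [mk_add_mk, mul_mk, mul_mk, mul_mk, mk_add_mk, conj_add, conj_add, mul_add, add_mul,
      mul_add, add_mul]
    congr 1 <;> abel

theorem add_mul : ∀ {n : ℕ} (x y z : CD n), mul (x + y) z = mul x z + mul y z
  | 0, x, y, z => _root_.add_mul (show ℝ from x) y z
  | _+1, x, y, z => by
    obtain ⟨a, b, rfl⟩ := exists_eq_mk x
    obtain ⟨a', b', rfl⟩ := exists_eq_mk y
    obtain ⟨c, d, rfl⟩ := exists_eq_mk z
    rw [mk_add_mk, mul_mk, mul_mk, mul_mk, mk_add_mk, mul_add, add_mul, mul_add, add_mul]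
    congr 1 <;> abel

end

section Additivity

variable {n : ℕ}

@[simp]
theorem conj_zero : conj (0 : CD n) = 0 := (AddMonoidHom.mk' conj conj_add).map_zero

@[simp]
theorem conj_neg (x : CD n) : conj (-x) = -conj x := (AddMonoidHom.mk' conj conj_add).map_neg x

@[simp]
theorem mul_zero (x : CD n) : mul x 0 = 0 := (AddMonoidHom.mk' (mul x) (mul_add x)).map_zero

@[simp]
theorem zero_mul (y : CD n) : mul 0 y = 0 :=
  (AddMonoidHom.mk' (mul · y) (add_mul · · y)).map_zero

@[simp]
theorem mul_neg (x y : CD n) : mul x (-y) = -mul x y :=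
  (AddMonoidHom.mk' (mul x) (mul_add x)).map_neg y

@[simp]
theorem neg_mul (x y : CD n) : mul (-x) y = -mul x y :=
  (AddMonoidHom.mk' (mul · y) (add_mul · · y)).map_neg x

end Additivity

section Halves

variable {n : ℕ} (a b c d : CD n)

@[simp]
theorem mk_zero_mul_mk_zero : mul (mk a 0) (mk c 0) = mk (mul a c) 0 := by
  simp [mul_mk]

@[simp]
theorem mk_zero_mul_zero_mk : mul (mk a 0) (mk 0 d) = mk 0 (mul d a) := by
  simp [mul_mk]

@[simp]
theorem zero_mk_mul_mk_zero : mul (mk 0 b) (mk c 0) = mk 0 (mul b (conj c)) := by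
  simp [mul_mk]

@[simp]
theorem zero_mk_mul_zero_mk : mul (mk 0 b) (mk 0 d) = mk (-mul (conj d) b) 0 := by
  simp [mul_mk]

end Halves

section Basis

variable {n k : ℕ}

theorem e_succ_of_lt (h : k < 2 ^ n) : e (n+1) k = mk (e n k) 0 := if_pos h

theorem e_succ_of_le (h : 2 ^ n ≤ k) : e (n+1) k = mk 0 (e n (k - 2 ^ n)) := if_neg h.not_gt

@[simp]
theorem conj_e_zero : ∀ {n : ℕ}, conj (e n 0) = e n 0
  | 0 => rfl
  | _+1 => by rw [e_succ_of_lt (Nat.two_pow_pos _), conj_mk, conj_e_zero, neg_zero]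

theorem conj_e : ∀ {n k : ℕ}, 0 < k → k < 2 ^ n → conj (e n k) = -e n k
  | 0, _, hk, hkn => absurd hkn (by simp [hk.ne'])
  | n+1, k, hk, hkn => by
    by_cases h : k < 2 ^ n
    · rw [e_succ_of_lt h, conj_mk, conj_e hk h, neg_zero, neg_mk, neg_zero]
    · rw [e_succ_of_le (not_lt.1 h), conj_mk, conj_zero, neg_mk, neg_zero]

@[simp]
theorem mul_e_zero : ∀ {n : ℕ} (x : CD n), mul x (e n 0) = x
  | 0, x => _root_.mul_one (show ℝ from x)
  | _+1, x => by
    obtain ⟨a, b, rfl⟩ := exists_eq_mk x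
    rw [e_succ_of_lt (Nat.two_pow_pos _), mul_mk, mul_e_zero, conj_zero, zero_mul, zero_mul,
      conj_e_zero, mul_e_zero, sub_zero, zero_add]

theorem e_succ_mul_e_succ {i j : ℕ} (hi : i < 2 ^ n) (hj : j < 2 ^ n) :
    mul (e (n+1) i) (e (n+1) j) = mk (mul (e n i) (e n j)) 0 := by
  rw [e_succ_of_lt hi, e_succ_of_lt hj, mk_zero_mul_mk_zero]

end Basis

theorem mul_e_two_e_four : mul (e 3 2) (e 3 4) = e 3 6 := by
  simp [e_succ_of_lt, e_succ_of_le]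

theorem mul_e_five_e_three : mul (e 3 5) (e 3 3) = e 3 6 := by
  simp [e_succ_of_lt, e_succ_of_le]

theorem mul_e_five_e_two : mul (e 3 5) (e 3 2) = -e 3 7 := by
  simp [e_succ_of_lt, e_succ_of_le]

theorem mul_e_three_e_four : mul (e 3 3) (e 3 4) = e 3 7 := by
  simp [e_succ_of_lt, e_succ_of_le]

end CD

open CD

/-- The 32-dimensional pathions `CD 5` contain zero divisors:
`(i_2 + i_19)(i_4 − i_21) = 0`. -/
theorem pathion_zero_divisor :
    CD.mul (CD.e 5 2 + CD.e 5 19) (CD.e 5 4 - CD.e 5 21) = 0 := by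
  have hx : e 5 2 + e 5 19 = mk (e 4 2) (e 4 3) := by simp [e_succ_of_lt, e_succ_of_le]
  have hy : e 5 4 - e 5 21 = mk (e 4 4) (-e 4 5) := by simp [e_succ_of_lt, e_succ_of_le]
  have hfst : mul (e 4 2) (e 4 4) = mul (e 4 5) (e 4 3) := by
    rw [e_succ_mul_e_succ (n := 3) (by decide) (by decide),
      e_succ_mul_e_succ (n := 3) (by decide) (by decide), mul_e_two_e_four, mul_e_five_e_three]
  have hsnd : mul (e 4 5) (e 4 2) = -mul (e 4 3) (e 4 4) := by
    rw [e_succ_mul_e_succ (n := 3) (by decide) (by decide),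
      e_succ_mul_e_succ (n := 3) (by decide) (by decide), mul_e_five_e_two, mul_e_three_e_four,
      neg_mk, neg_zero]
  rw [hx, hy, mul_mk, conj_neg, conj_e (by decide) (by decide), conj_e (by decide) (by decide),
    neg_neg, CD.neg_mul, CD.mul_neg, hfst, hsnd, sub_self, neg_neg, add_neg_cancel, mk_zero_zero]
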